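/- arXiv:2404.08715 — 2 statements merged into one kernel-verified Lean document; each statement's English description precedes it below -/
import Mathlib

section
/- Let d be a positive integer. Let y, y' ∈ ℝ with |y| ≤ 1 and |y'| ≤ 1, and let x, x' : Fin (d+1) → ℝ satisfy x_0 = x'_0 = 1 and |x_j| ≤ 1/√d, |x'_j| ≤ 1/√d for all j ∈ {1,…,d}. Then (1/4)|y² − y'²| + (1/2) ∑_{j=0}^{d} |y·x_j − y'·x'_j| + (1/4) ∑_{j=0}^{d} |x_j² − x'_j²| + (1/4) ∑_{j=0}^{d} ∑_{h=0, h≠j}^{d} |x_j x_h − x'_j x'_h| ≤ 2 + 2√d + d/2. -/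
open Finset

/-!
Bounding each `|p - q|` by `|p| + |q|` splits the change of the weights into one contribution
per sample, and the contribution of a sample `(y, x)` is exactly `(|y| + ∑ⱼ |xⱼ|)² / 4`.
Standardization gives `|y| + ∑ⱼ |xⱼ| ≤ 1 + 1 + d · (1/√d) = 2 + √d`, and
`2 · (2 + √d)² / 4 = 2 + 2√d + d/2`.
-/

theorem abs_mul_sub_mul_le (a b c e : ℝ) : |a * b - c * e| ≤ |a| * |b| + |c| * |e| := by
  simpa only [abs_mul] using abs_sub (a * b) (c * e)

theorem Finset.sq_sum_eq_sum_sq_add_sum_sum_erase {ι R : Type*} [DecidableEq ι]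
    [CommSemiring R] (s : Finset ι) (f : ι → R) :
    (∑ j ∈ s, f j) ^ 2 = ∑ j ∈ s, f j ^ 2 + ∑ j ∈ s, ∑ h ∈ s.erase j, f j * f h := by
  rw [sq, sum_mul_sum, ← sum_add_distrib]
  refine sum_congr rfl fun j hj => ?_
  rw [← add_sum_erase s _ hj, sq]

theorem sq_abs_add_sum_abs_div_four {ι : Type*} [Fintype ι] [DecidableEq ι]
    (a : ℝ) (v : ι → ℝ) :
    (|a| + ∑ j, |v j|) ^ 2 / 4
      = 1 / 4 * (|a| * |a|) + 1 / 2 * ∑ j, |a| * |v j| + 1 / 4 * ∑ j, |v j| * |v j|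
        + 1 / 4 * ∑ j, ∑ h ∈ univ.erase j, |v j| * |v h| := by
  rw [add_sq, sq_sum_eq_sum_sq_add_sum_sum_erase, ← mul_sum]
  simp only [sq]
  ring

theorem logistic_weight_change_le {ι : Type*} [Fintype ι] [DecidableEq ι]
    (y y' : ℝ) (x x' : ι → ℝ) :
    (1 / 4) * |y ^ 2 - y' ^ 2|
      + (1 / 2) * ∑ j, |y * x j - y' * x' j|
      + (1 / 4) * ∑ j, |(x j) ^ 2 - (x' j) ^ 2|
      + (1 / 4) * ∑ j, ∑ h ∈ univ.erase j, |x j * x h - x' j * x' h|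
    ≤ (|y| + ∑ j, |x j|) ^ 2 / 4 + (|y'| + ∑ j, |x' j|) ^ 2 / 4 := by
  calc _ ≤ 1 / 4 * (|y| * |y| + |y'| * |y'|)
          + 1 / 2 * ∑ j, (|y| * |x j| + |y'| * |x' j|)
          + 1 / 4 * ∑ j, (|x j| * |x j| + |x' j| * |x' j|)
          + 1 / 4 * ∑ j, ∑ h ∈ univ.erase j, (|x j| * |x h| + |x' j| * |x' h|) := by
        simp only [sq]
        gcongr <;> apply abs_mul_sub_mul_le
    _ = _ := by
        rw [sq_abs_add_sum_abs_div_four, sq_abs_add_sum_abs_div_four]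
        simp only [sum_add_distrib]
        ring

theorem sum_abs_le_one_add_sqrt {d : ℕ} (x : Fin (d + 1) → ℝ) (hx0 : x 0 = 1)
    (hx : ∀ j : Fin (d + 1), j ≠ 0 → |x j| ≤ 1 / Real.sqrt d) :
    ∑ j, |x j| ≤ 1 + Real.sqrt d := by
  have htail : ∑ i : Fin d, |x i.succ| ≤ ∑ _i : Fin d, 1 / Real.sqrt d :=
    sum_le_sum fun i _ => hx i.succ i.succ_ne_zero
  rw [Fin.sum_univ_succ, hx0, abs_one]
  rw [sum_const, card_univ, Fintype.card_fin, nsmul_eq_mul, mul_one_div,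
    Real.div_sqrt] at htail
  linarith

theorem logistic_sensitivity_bound_general (d : ℕ)
    (y y' : ℝ) (hy : |y| ≤ 1) (hy' : |y'| ≤ 1)
    (x x' : Fin (d + 1) → ℝ)
    (hx0 : x 0 = 1) (hx0' : x' 0 = 1)
    (hx : ∀ j : Fin (d + 1), j ≠ 0 → |x j| ≤ 1 / Real.sqrt d)
    (hx' : ∀ j : Fin (d + 1), j ≠ 0 → |x' j| ≤ 1 / Real.sqrt d) :
    (1 / 4) * |y ^ 2 - y' ^ 2|
      + (1 / 2) * ∑ j, |y * x j - y' * x' j|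
      + (1 / 4) * ∑ j, |(x j) ^ 2 - (x' j) ^ 2|
      + (1 / 4) * ∑ j, ∑ h ∈ Finset.univ.erase j, |x j * x h - x' j * x' h|
    ≤ 2 + 2 * Real.sqrt d + (d : ℝ) / 2 := by
  have hmass := sum_abs_le_one_add_sqrt x hx0 hx
  have hmass' := sum_abs_le_one_add_sqrt x' hx0' hx'
  calc _ ≤ (|y| + ∑ j, |x j|) ^ 2 / 4 + (|y'| + ∑ j, |x' j|) ^ 2 / 4 :=
        logistic_weight_change_le y y' x x'
    _ ≤ (2 + Real.sqrt d) ^ 2 / 4 + (2 + Real.sqrt d) ^ 2 / 4 := by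
        gcongr ?_ ^ 2 / 4 + ?_ ^ 2 / 4 <;> linarith
    _ = 2 + 2 * Real.sqrt d + (d : ℝ) / 2 := by
        rw [add_sq, Real.sq_sqrt d.cast_nonneg]
        ring

/-- Proposition 5: L1 sensitivity bound for the weights of the truncated
logistic log-likelihood when two standardized neighboring samples are
exchanged. -/
theorem logistic_sensitivity_bound (d : ℕ) (hd : 0 < d)
    (y y' : ℝ) (hy : |y| ≤ 1) (hy' : |y'| ≤ 1)
    (x x' : Fin (d + 1) → ℝ)
    (hx0 : x 0 = 1) (hx0' : x' 0 = 1)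
    (hx : ∀ j : Fin (d + 1), j ≠ 0 → |x j| ≤ 1 / Real.sqrt d)
    (hx' : ∀ j : Fin (d + 1), j ≠ 0 → |x' j| ≤ 1 / Real.sqrt d) :
    (1 / 4) * |y ^ 2 - y' ^ 2|
      + (1 / 2) * ∑ j, |y * x j - y' * x' j|
      + (1 / 4) * ∑ j, |(x j) ^ 2 - (x' j) ^ 2|
      + (1 / 4) * ∑ j, ∑ h ∈ Finset.univ.erase j, |x j * x h - x' j * x' h|
    ≤ 2 + 2 * Real.sqrt d + (d : ℝ) / 2 :=
  logistic_sensitivity_bound_general d y y' hy hy' x x' hx0 hx0' hx hx'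
end

section
/- Let d and n be positive integers, let ε > 0, and set Δ = 2 + 2√d + d/2. Let (y, x) and (y', x') be two datasets with y, y' : Fin n → ℝ, x, x' : Fin n → Fin (d+1) → ℝ that agree on all samples except the last one, and suppose every sample in both datasets is standardized: |y_i| ≤ 1, x_{i0} = 1, and |x_{ij}| ≤ 1/√d for j ∈ {1,…,d}. Define for each dataset the logistic weights w_1 = −n(3/2 + 2 log 2), w_q = 2n, w_{q²} = −(n/2 + (1/4) ∑_i y_i²), w_{p_j q} = (1/2) ∑_i y_i x_{ij} (j = 0,…,d), w_{p_j²} = −(1/4) ∑_i x_{ij}² (j = 0,…,d), and w_{p_j p_h} = −(1/4) ∑_i x_{ij} x_{ih} (j ≠ h). Then for every choice of real target values t_•, one for each weight index, the product over all weight indices of the Laplace densities (ε/(2Δ)) exp(−ε|t_• − w_•^D|/Δ) is at most exp(ε) times the product over all weight indices of (ε/(2Δ)) exp(−ε|t_• − w_•^{D'}|/Δ). -/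
/-!
Each logistic weight is `k · ∑ᵢ φ(sample i)` for a feature `φ` bounded by some `c` on standardized
samples, so on neighbouring datasets it moves by at most `2 |k| c`. With `B = (1, 1/√d, …, 1/√d)`
bounding `|x_j|`, these shifts add up to `1/2 + ‖B‖₁ + ‖B‖₁² / 2 = Δ`, where `‖B‖₁ = 1 + √d`.
A shift by `s` changes a Laplace density of scale `Δ/ε` by a factor at most `e^{ε s / Δ}`, and
these factors multiply to `e^ε`.
-/

open Finset

/-- The Laplace density with zero mean and scale `Δ/ε`, evaluated at `t`. -/
noncomputable def lapDensity (ε Δ t : ℝ) : ℝ :=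
  (ε / (2 * Δ)) * Real.exp (-(ε * |t|) / Δ)

/-- `F ≤ e^α G` with `F ≥ 0`; unlike the bare inequality, this is stable under products. -/
def ExpDominated (α F G : ℝ) : Prop :=
  0 ≤ F ∧ F ≤ Real.exp α * G

namespace ExpDominated

variable {α β F G F' G' : ℝ}

lemma refl (hF : 0 ≤ F) : ExpDominated 0 F F :=
  ⟨hF, by rw [Real.exp_zero, one_mul]⟩

lemma mul (h : ExpDominated α F G) (h' : ExpDominated β F' G') :
    ExpDominated (α + β) (F * F') (G * G') := by
  refine ⟨mul_nonneg h.1 h'.1, ?_⟩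
  calc F * F' ≤ (Real.exp α * G) * (Real.exp β * G') :=
        mul_le_mul h.2 h'.2 h'.1 (h.1.trans h.2)
    _ = Real.exp (α + β) * (G * G') := by rw [Real.exp_add]; ring

lemma prod {ι : Type*} {s : Finset ι} {α F G : ι → ℝ}
    (h : ∀ j ∈ s, ExpDominated (α j) (F j) (G j)) :
    ExpDominated (∑ j ∈ s, α j) (∏ j ∈ s, F j) (∏ j ∈ s, G j) := by
  refine ⟨prod_nonneg fun j hj => (h j hj).1, ?_⟩
  calc ∏ j ∈ s, F j ≤ ∏ j ∈ s, Real.exp (α j) * G j :=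
        prod_le_prod (fun j hj => (h j hj).1) fun j hj => (h j hj).2
    _ = Real.exp (∑ j ∈ s, α j) * ∏ j ∈ s, G j := by
        rw [prod_mul_distrib, Real.exp_sum]

end ExpDominated

section Laplace

variable {ε Δ : ℝ}

lemma lapDensity_nonneg (hε : 0 ≤ ε) (hΔ : 0 ≤ Δ) (t : ℝ) : 0 ≤ lapDensity ε Δ t := by
  unfold lapDensity
  positivity

lemma lapDensity_expDominated (hε : 0 ≤ ε) (hΔ : 0 ≤ Δ) {a b c : ℝ} (h : |a - b| ≤ c) :
    ExpDominated (ε / Δ * c) (lapDensity ε Δ a) (lapDensity ε Δ b) := by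
  refine ⟨lapDensity_nonneg hε hΔ a, ?_⟩
  have hr : 0 ≤ ε / Δ := div_nonneg hε hΔ
  have hab : |b| - |a| ≤ c := by
    linarith [abs_sub_abs_le_abs_sub b a, abs_sub_comm a b]
  unfold lapDensity
  simp only [neg_div, mul_div_right_comm ε]
  rw [mul_left_comm, ← Real.exp_add]
  gcongr
  nlinarith

lemma lapDensity_sub_expDominated (hε : 0 ≤ ε) (hΔ : 0 ≤ Δ) (t : ℝ) {w w' c : ℝ}
    (h : |w - w'| ≤ c) :
    ExpDominated (ε / Δ * c) (lapDensity ε Δ (t - w)) (lapDensity ε Δ (t - w')) :=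
  lapDensity_expDominated hε hΔ (by rwa [sub_sub_sub_cancel_left, abs_sub_comm])

end Laplace

section Sensitivity

variable {ι : Type*} [Fintype ι] {f g : ι → ℝ} {c : ℝ}

lemma abs_sum_sub_sum_le_of_eq_off (m : ι) (hfg : ∀ i, i ≠ m → f i = g i)
    (hf : |f m| ≤ c) (hg : |g m| ≤ c) :
    |∑ i, f i - ∑ i, g i| ≤ 2 * c := by
  rw [← sum_sub_distrib, sum_eq_single m (fun i _ hi => sub_eq_zero.2 (hfg i hi))
    (fun hm => absurd (mem_univ m) hm)]
  linarith [abs_sub (f m) (g m)]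

lemma abs_mul_sum_sub_mul_sum_le (k : ℝ) (m : ι) (hfg : ∀ i, i ≠ m → f i = g i)
    (hf : |f m| ≤ c) (hg : |g m| ≤ c) :
    |k * ∑ i, f i - k * ∑ i, g i| ≤ |k| * (2 * c) := by
  rw [← mul_sub, abs_mul]
  exact mul_le_mul_of_nonneg_left (abs_sum_sub_sum_le_of_eq_off m hfg hf hg) (abs_nonneg k)

end Sensitivity

lemma abs_mul_le_of_abs_le {a b p q : ℝ} (ha : |a| ≤ p) (hb : |b| ≤ q) : |a * b| ≤ p * q := by
  rw [abs_mul]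
  exact mul_le_mul ha hb (abs_nonneg b) ((abs_nonneg a).trans ha)

lemma abs_sq_le_sq_of_abs_le {a p : ℝ} (h : |a| ≤ p) : |a ^ 2| ≤ p ^ 2 := by
  rw [abs_pow]
  exact pow_le_pow_left₀ (abs_nonneg a) h 2

lemma sum_sq_add_sum_sum_erase_mul {ι : Type*} [Fintype ι] [DecidableEq ι] (B : ι → ℝ) :
    ∑ j, B j ^ 2 + ∑ j, ∑ h ∈ univ.erase j, B j * B h = (∑ j, B j) ^ 2 := by
  rw [sq, sum_mul_sum, ← sum_add_distrib]
  exact sum_congr rfl fun j _ => by rw [sq, add_sum_erase _ (fun h => B j * B h) (mem_univ j)]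

noncomputable def featureBound (d : ℕ) (j : Fin (d + 1)) : ℝ :=
  if j = 0 then 1 else 1 / Real.sqrt d

lemma abs_le_featureBound {d : ℕ} {v : Fin (d + 1) → ℝ} (h0 : v 0 = 1)
    (hv : ∀ j : Fin (d + 1), j ≠ 0 → |v j| ≤ 1 / Real.sqrt d) (j : Fin (d + 1)) :
    |v j| ≤ featureBound d j := by
  unfold featureBound
  split_ifs with hj
  · rw [hj, h0, abs_one]
  · exact hv j hj

lemma sum_featureBound (d : ℕ) : ∑ j, featureBound d j = 1 + Real.sqrt d := by
  simp [featureBound, Fin.sum_univ_succ, Fin.succ_ne_zero, ← div_eq_mul_inv, Real.div_sqrt]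

/-- The `ℓ¹`-sensitivity of the logistic weights:
twice `1/4 · 1 + ∑ⱼ 1/2 · B_j + ∑ⱼₕ 1/4 · B_j B_h`. -/
lemma logistic_weight_sensitivity (d : ℕ) :
    1 / 2 + ∑ j, featureBound d j + (∑ j, featureBound d j ^ 2
      + ∑ j, ∑ h ∈ univ.erase j, featureBound d j * featureBound d h) / 2
      = 2 + 2 * Real.sqrt d + (d : ℝ) / 2 := by
  rw [sum_sq_add_sum_sum_erase_mul, sum_featureBound]
  linear_combination Real.sq_sqrt (Nat.cast_nonneg (α := ℝ) d) / 2

theorem logistic_dp_density_ratio_general (n d : ℕ) (hn : 0 < n)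
    (ε : ℝ) (hε : 0 < ε) (Δ : ℝ) (hΔ : Δ = 2 + 2 * Real.sqrt d + (d : ℝ) / 2)
    (y y' : Fin n → ℝ) (x x' : Fin n → Fin (d + 1) → ℝ)
    (hagree : ∀ i : Fin n, (i : ℕ) + 1 < n → y i = y' i ∧ ∀ j, x i j = x' i j)
    (hy : ∀ i, |y i| ≤ 1) (hy' : ∀ i, |y' i| ≤ 1)
    (hx0 : ∀ i, x i 0 = 1) (hx0' : ∀ i, x' i 0 = 1)
    (hx : ∀ i, ∀ j : Fin (d + 1), j ≠ 0 → |x i j| ≤ 1 / Real.sqrt d)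
    (hx' : ∀ i, ∀ j : Fin (d + 1), j ≠ 0 → |x' i j| ≤ 1 / Real.sqrt d)
    (t1 tq tq2 : ℝ) (tpq tp2 : Fin (d + 1) → ℝ)
    (tpp : Fin (d + 1) → Fin (d + 1) → ℝ) :
    lapDensity ε Δ (t1 - (-(n : ℝ) * (3 / 2 + 2 * Real.log 2)))
      * lapDensity ε Δ (tq - 2 * (n : ℝ))
      * lapDensity ε Δ (tq2 - (-((n : ℝ) / 2 + (1 / 4) * ∑ i, (y i) ^ 2)))
      * (∏ j, lapDensity ε Δ (tpq j - (1 / 2) * ∑ i, y i * x i j))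
      * (∏ j, lapDensity ε Δ (tp2 j - (-(1 / 4) * ∑ i, (x i j) ^ 2)))
      * (∏ j, ∏ h ∈ Finset.univ.erase j,
          lapDensity ε Δ (tpp j h - (-(1 / 4) * ∑ i, x i j * x i h)))
    ≤ Real.exp ε *
      (lapDensity ε Δ (t1 - (-(n : ℝ) * (3 / 2 + 2 * Real.log 2)))
        * lapDensity ε Δ (tq - 2 * (n : ℝ))
        * lapDensity ε Δ (tq2 - (-((n : ℝ) / 2 + (1 / 4) * ∑ i, (y' i) ^ 2)))
        * (∏ j, lapDensity ε Δ (tpq j - (1 / 2) * ∑ i, y' i * x' i j))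
        * (∏ j, lapDensity ε Δ (tp2 j - (-(1 / 4) * ∑ i, (x' i j) ^ 2)))
        * (∏ j, ∏ h ∈ Finset.univ.erase j,
            lapDensity ε Δ (tpp j h - (-(1 / 4) * ∑ i, x' i j * x' i h)))) := by
  have hΔ0 : 0 < Δ := by rw [hΔ]; positivity
  obtain ⟨m, hoff⟩ : ∃ m : Fin n, ∀ i, i ≠ m → y i = y' i ∧ ∀ j, x i j = x' i j :=
    ⟨⟨n - 1, by omega⟩, fun i hi =>
      hagree i (by have : (i : ℕ) ≠ n - 1 := Fin.val_ne_iff.2 hi; omega)⟩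
  have hB (i j) : |x i j| ≤ featureBound d j := abs_le_featureBound (hx0 i) (hx i) j
  have hB' (i j) : |x' i j| ≤ featureBound d j := abs_le_featureBound (hx0' i) (hx' i) j
  have lap := lapDensity_sub_expDominated hε.le hΔ0.le
  have hconst := ExpDominated.refl (mul_nonneg (lapDensity_nonneg hε.le hΔ0.le
    (t1 - (-(n : ℝ) * (3 / 2 + 2 * Real.log 2)))) (lapDensity_nonneg hε.le hΔ0.le (tq - 2 * n)))
  have hq2 := lap tq2 (w := -((n : ℝ) / 2 + (1 / 4) * ∑ i, (y i) ^ 2))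
      (w' := -((n : ℝ) / 2 + (1 / 4) * ∑ i, (y' i) ^ 2)) <|
    Eq.trans_le (by rw [neg_sub_neg, add_sub_add_left_eq_sub, abs_sub_comm]) <|
      abs_mul_sum_sub_mul_sum_le (f := fun i => y' i ^ 2) (g := fun i => y i ^ 2) (1 / 4) m
        (fun i hi => by rw [(hoff i hi).1])
        (abs_sq_le_sq_of_abs_le (hy' m)) (abs_sq_le_sq_of_abs_le (hy m))
  have hpq := ExpDominated.prod (s := univ) fun j _ => lap (tpq j) <|
    abs_mul_sum_sub_mul_sum_le (f := fun i => y i * x i j) (g := fun i => y' i * x' i j) (1 / 2) m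
      (fun i hi => by rw [(hoff i hi).1, (hoff i hi).2 j])
      (abs_mul_le_of_abs_le (hy m) (hB m j)) (abs_mul_le_of_abs_le (hy' m) (hB' m j))
  have hp2 := ExpDominated.prod (s := univ) fun j _ => lap (tp2 j) <|
    abs_mul_sum_sub_mul_sum_le (f := fun i => x i j ^ 2) (g := fun i => x' i j ^ 2) (-(1 / 4)) m
      (fun i hi => by rw [(hoff i hi).2 j])
      (abs_sq_le_sq_of_abs_le (hB m j)) (abs_sq_le_sq_of_abs_le (hB' m j))
  have hpp := ExpDominated.prod (s := univ) fun j _ =>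
    ExpDominated.prod (s := univ.erase j) fun h _ => lap (tpp j h) <|
      abs_mul_sum_sub_mul_sum_le
        (f := fun i => x i j * x i h) (g := fun i => x' i j * x' i h) (-(1 / 4)) m
        (fun i hi => by rw [(hoff i hi).2 j, (hoff i hi).2 h])
        (abs_mul_le_of_abs_le (hB m j) (hB m h)) (abs_mul_le_of_abs_le (hB' m j) (hB' m h))
  convert ((((hconst.mul hq2).mul hpq).mul hp2).mul hpp).2 using 3
  set r := ε / Δ with hr
  conv_lhs => rw [← div_mul_cancel₀ ε hΔ0.ne', ← hr, hΔ, ← logistic_weight_sensitivity]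
  simp only [abs_neg, abs_of_pos (by norm_num : (0 : ℝ) < 1 / 4),
    abs_of_pos (by norm_num : (0 : ℝ) < 1 / 2), add_div, sum_div, mul_add, mul_sum]
  ring_nf

/-- Proposition 6: the density-ratio inequality establishing that the
differentially private logistic regression (Algorithm 2) satisfies
ε-differential privacy. -/
theorem logistic_dp_density_ratio (n d : ℕ) (hn : 0 < n) (hd : 0 < d)
    (ε : ℝ) (hε : 0 < ε) (Δ : ℝ) (hΔ : Δ = 2 + 2 * Real.sqrt d + (d : ℝ) / 2)
    (y y' : Fin n → ℝ) (x x' : Fin n → Fin (d + 1) → ℝ)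
    (hagree : ∀ i : Fin n, (i : ℕ) + 1 < n → y i = y' i ∧ ∀ j, x i j = x' i j)
    (hy : ∀ i, |y i| ≤ 1) (hy' : ∀ i, |y' i| ≤ 1)
    (hx0 : ∀ i, x i 0 = 1) (hx0' : ∀ i, x' i 0 = 1)
    (hx : ∀ i, ∀ j : Fin (d + 1), j ≠ 0 → |x i j| ≤ 1 / Real.sqrt d)
    (hx' : ∀ i, ∀ j : Fin (d + 1), j ≠ 0 → |x' i j| ≤ 1 / Real.sqrt d)
    (t1 tq tq2 : ℝ) (tpq tp2 : Fin (d + 1) → ℝ)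
    (tpp : Fin (d + 1) → Fin (d + 1) → ℝ) :
    lapDensity ε Δ (t1 - (-(n : ℝ) * (3 / 2 + 2 * Real.log 2)))
      * lapDensity ε Δ (tq - 2 * (n : ℝ))
      * lapDensity ε Δ (tq2 - (-((n : ℝ) / 2 + (1 / 4) * ∑ i, (y i) ^ 2)))
      * (∏ j, lapDensity ε Δ (tpq j - (1 / 2) * ∑ i, y i * x i j))
      * (∏ j, lapDensity ε Δ (tp2 j - (-(1 / 4) * ∑ i, (x i j) ^ 2)))
      * (∏ j, ∏ h ∈ Finset.univ.erase j,
          lapDensity ε Δ (tpp j h - (-(1 / 4) * ∑ i, x i j * x i h)))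
    ≤ Real.exp ε *
      (lapDensity ε Δ (t1 - (-(n : ℝ) * (3 / 2 + 2 * Real.log 2)))
        * lapDensity ε Δ (tq - 2 * (n : ℝ))
        * lapDensity ε Δ (tq2 - (-((n : ℝ) / 2 + (1 / 4) * ∑ i, (y' i) ^ 2)))
        * (∏ j, lapDensity ε Δ (tpq j - (1 / 2) * ∑ i, y' i * x' i j))
        * (∏ j, lapDensity ε Δ (tp2 j - (-(1 / 4) * ∑ i, (x' i j) ^ 2)))
        * (∏ j, ∏ h ∈ Finset.univ.erase j,
            lapDensity ε Δ (tpp j h - (-(1 / 4) * ∑ i, x' i j * x' i h)))) :=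
  logistic_dp_density_ratio_general n d hn ε hε Δ hΔ y y' x x' hagree hy hy' hx0 hx0' hx hx' t1 tq
    tq2 tpq tp2 tpp
end
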